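/- arXiv:alg-geom/9708010 — 3 statements merged into one kernel-verified Lean document; each statement's English description precedes it below -/
import Mathlib

section
/- Let C be a category in which projectors are effective (every idempotent endomorphism of an object splits) and which admits the relevant inverse limits; precisely, assume that for every functor ψ : A ⥤ C from a small category A, the forgetful functor from the category D(ψ) of cocones under ψ to C admits a limit. Then C admits direct limits: every functor ψ : A ⥤ C from a small category A has a colimit. -/
open CategoryTheory CategoryTheory.Limits

universe w v u

/-- If every idempotent in `C` splits (projectors are effective) and, for every functor
`ψ : A ⥤ C` from a small category `A`, the forgetful functor from the category of cocones
under `ψ` to `C` admits a limit, then `C` admits direct limits: every such `ψ` has a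
colimit. -/
theorem limits_and_effective_projectors_give_direct_limits
    {C : Type u} [Category.{v} C] [IsIdempotentComplete C]
    (h : ∀ (A : Type w) [SmallCategory A] (ψ : A ⥤ C), HasLimit (Cocones.forget ψ))
    (A : Type w) [SmallCategory A] (ψ : A ⥤ C) :
    HasColimit ψ := by
  have := h A ψ
  -- the limit of the forgetful functor
  set L := limit (Cocones.forget ψ) with hL
  -- components into the limit
  let ι : ∀ a : A, ψ.obj a ⟶ L := fun a =>
    limit.lift (Cocones.forget ψ)
      { pt := ψ.obj a
        π := { app := fun s => s.ι.app a
               naturality := fun s t f => by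
                 dsimp
                 exact (Category.id_comp _).trans (f.w a).symm } }
  have hι : ∀ (a : A) (s : Cocone ψ), ι a ≫ limit.π (Cocones.forget ψ) s = s.ι.app a := by
    intro a s
    simp [ι]
    rfl
  -- the cocone with apex L
  let c₀ : Cocone ψ :=
    { pt := L
      ι := { app := ι
             naturality := fun a b f => by
               dsimp
               refine limit.hom_ext (fun s => ?_)
               simp only [Category.assoc, hι, Category.id_comp, Category.comp_id]
               exact s.w f } }
  -- the idempotent
  let e : L ⟶ L := limit.π (Cocones.forget ψ) c₀
  have key : ∀ (s : Cocone ψ) (g : c₀ ⟶ s),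
      e ≫ g.hom = limit.π (Cocones.forget ψ) s := fun s g =>
    limit.w (Cocones.forget ψ) g
  have he : e ≫ e = e := key c₀ { hom := e, w := fun a => hι a c₀ }
  have hes : ∀ s : Cocone ψ, e ≫ limit.π (Cocones.forget ψ) s = limit.π (Cocones.forget ψ) s :=
    fun s => key s { hom := limit.π (Cocones.forget ψ) s, w := fun a => hι a s }
  obtain ⟨P, i, r, hir, hri⟩ := IsIdempotentComplete.idempotents_split L e he
  -- the colimit cocone
  let c : Cocone ψ :=
    { pt := P
      ι := { app := fun a => ι a ≫ r
             naturality := fun a b f => by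
               dsimp
               rw [← Category.assoc, c₀.w f]
               simp
               rfl } }
  have hcolim : IsColimit c :=
    { desc := fun s => i ≫ limit.π (Cocones.forget ψ) s
      fac := fun s a => by
        change (ι a ≫ r) ≫ i ≫ limit.π (Cocones.forget ψ) s = s.ι.app a
        rw [Category.assoc, ← Category.assoc r i, hri]
        change ι a ≫ e ≫ _ = _
        rw [hes, hι]
      uniq := fun s m hm => by
        change m = i ≫ limit.π (Cocones.forget ψ) s
        have hg : e ≫ (r ≫ m) = limit.π (Cocones.forget ψ) s := by
          refine key s ⟨r ≫ m, fun a => ?_⟩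
          show ι a ≫ r ≫ m = s.ι.app a
          rw [← Category.assoc]
          exact hm a
        have hie : i ≫ e = i := by
          rw [← hri, ← Category.assoc, hir, Category.id_comp]
        have h2 := congrArg (fun x => i ≫ x) hg
        change i ≫ e ≫ r ≫ m = i ≫ limit.π (Cocones.forget ψ) s at h2
        rw [← Category.assoc, hie, ← Category.assoc, hir, Category.id_comp] at h2
        exact h2 }
  exact HasColimit.mk ⟨c, hcolim⟩
end

section
/- Let ψ : A ⥤ C be a functor between categories such that the forgetful functor f from the category D(ψ) of cocones under ψ to C admits a limit δ, with limit projections π_{(c,u)} : δ → c for each cocone (c,u). Then: (1) for each object a of A, the family of morphisms (u_a : ψ(a) → c), indexed by the cocones (c,u), is a cone over f, and hence induces a morphism v_a : ψ(a) → δ; (2) the v_a are natural in a, so they form a cocone v : ψ ⟶ (const δ); (3) each projection π_{(c,u)} is a morphism of cocones (δ, v) → (c, u); and (4) (δ, v) is an initial object of D(ψ), i.e. v : ψ → δ exhibits δ as a colimit of ψ. -/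
open CategoryTheory CategoryTheory.Limits

universe v₁ u₁ v₂ u₂

/-- The cone over the forgetful functor with point `ψ.obj a`, components `s.ι.app a`. -/
def coconeEvalCone {A : Type u₁} [Category.{v₁} A] {C : Type u₂} [Category.{v₂} C]
    (ψ : A ⥤ C) (a : A) : Cone (Cocones.forget ψ) where
  pt := ψ.obj a
  π := { app := fun s => s.ι.app a
         naturality := fun s t f => by exact (Category.id_comp _).trans (f.w a).symm }

/-- Suppose the forgetful functor `f` from the category of cocones under `ψ : A ⥤ C`
to `C` admits a limit `δ`, with projections `limit.π f s : δ ⟶ s.pt`.  Then: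
(1) for each object `a` of `A`, the family `s ↦ s.ι.app a` is a cone over `f`
    (it is compatible with all morphisms of cocones);
(2) there is an induced natural transformation `v : ψ ⟶ const δ` (a cocone), whose
    components are the morphisms induced by these cones, i.e.
(3) each projection `limit.π f s` is a morphism of cocones `(δ, v) ⟶ s`; and
(4) the cocone `(δ, v)` is a colimit of `ψ` (an initial object of the category of
    cocones). -/
theorem limit_of_forgetful_functor_on_cocones_is_colimit
    {A : Type u₁} [Category.{v₁} A] {C : Type u₂} [Category.{v₂} C]
    (ψ : A ⥤ C) [HasLimit (Cocones.forget ψ)] :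
    -- (1) the family `(s.ι.app a)_s` is a cone over the forgetful functor
    (∀ (a : A) (s t : Cocone ψ) (f : s ⟶ t), s.ι.app a ≫ f.hom = t.ι.app a) ∧
    -- (2) there is a natural transformation `v` (so the induced morphisms are natural in `a`)
    ∃ v : ψ ⟶ (Functor.const A).obj (limit (Cocones.forget ψ)),
      -- (3) each limit projection is a morphism of cocones `(δ, v) ⟶ (c, u)`
      (∀ (a : A) (s : Cocone ψ), v.app a ≫ limit.π (Cocones.forget ψ) s = s.ι.app a) ∧
      -- (4) `(δ, v)` is a colimit of `ψ`
      Nonempty (IsColimit (Cocone.mk (limit (Cocones.forget ψ)) v)) := by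
  refine ⟨fun a s t f => f.w a, ?_⟩
  -- the induced natural transformation
  refine ⟨{ app := fun a => limit.lift _ (coconeEvalCone ψ a)
            naturality := fun a b g => by
              apply limit.hom_ext
              intro s
              simp [coconeEvalCone]
              exact s.w g }, ?_, ?_⟩
  · intro a s
    simp [coconeEvalCone]
    exact rfl
  · -- the colimit
    set v : ψ ⟶ (Functor.const A).obj (limit (Cocones.forget ψ)) :=
      { app := fun a => limit.lift _ (coconeEvalCone ψ a)
        naturality := fun a b g => by
          apply limit.hom_ext
          intro s
          simp [coconeEvalCone]
          exact s.w g } with hv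
    set D : Cocone ψ := Cocone.mk (limit (Cocones.forget ψ)) v with hD
    have hfac : ∀ (a : A) (s : Cocone ψ),
        v.app a ≫ limit.π (Cocones.forget ψ) s = s.ι.app a := by
      intro a s
      simp [hv, coconeEvalCone]
      exact rfl
    have key : limit.π (Cocones.forget ψ) D = 𝟙 _ := by
      apply limit.hom_ext
      intro s
      have := limit.w (Cocones.forget ψ)
        (⟨limit.π (Cocones.forget ψ) s, fun a => hfac a s⟩ : D ⟶ s)
      exact this.trans (Category.id_comp _).symm
    refine ⟨{ desc := fun s => limit.π (Cocones.forget ψ) s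
              fac := fun s a => hfac a s
              uniq := fun s m hm => ?_ }⟩
    have := limit.w (Cocones.forget ψ) (⟨m, fun a => hm a⟩ : D ⟶ s)
    rw [key] at this
    exact (Category.id_comp _).symm.trans this
end

section
/- Let C be an idempotent-complete category, ψ : A ⥤ C a functor from a category A, and D(ψ) the category of cocones under ψ. Let S be a class of cocones (objects of D(ψ)) such that: (i) every object of D(ψ) receives at least one morphism from an object satisfying S; (ii) for every object d of D(ψ) and every pair of morphisms f' : d' → d, f'' : d'' → d with S(d') and S(d''), there exist an object d''' with S(d'''), a morphism h : d''' → d, and morphisms g' : d' → d''' and g'' : d'' → d''' with g' ≫ h = f' and g'' ≫ h = f''; (iii) S is closed under retracts in D(ψ): if S(d) and t is a retract of d in D(ψ), then S(t); and (iv) the forgetful functor from the full subcategory of D(ψ) on S to C admits a limit. Then ψ admits a colimit. -/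
open CategoryTheory CategoryTheory.Limits

universe v₁ u₁ v₂ u₂

/-- Let `C` be an idempotent-complete category, `ψ : A ⥤ C` a functor, and `S` a class of
cocones under `ψ` such that: (i) every cocone receives a morphism from a cocone satisfying
`S`; (ii) any two morphisms into a cocone `d` from cocones satisfying `S` factor through a
common morphism `d''' ⟶ d` with `S d'''`; (iii) `S` is closed under retracts in the
category of cocones; and (iv) the forgetful functor from the full subcategory of cocones
satisfying `S` to `C` admits a limit.  Then `ψ` admits a colimit. -/
theorem hasColimit_of_bounded_cocones_limit
    {A : Type u₁} [Category.{v₁} A] {C : Type u₂} [Category.{v₂} C]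
    [IsIdempotentComplete C] (ψ : A ⥤ C) (S : Cocone ψ → Prop)
    (h1 : ∀ d : Cocone ψ, ∃ d' : Cocone ψ, S d' ∧ Nonempty (d' ⟶ d))
    (h2 : ∀ (d d' d'' : Cocone ψ) (f' : d' ⟶ d) (f'' : d'' ⟶ d), S d' → S d'' →
      ∃ (d''' : Cocone ψ) (_ : S d''') (h : d''' ⟶ d) (g' : d' ⟶ d''') (g'' : d'' ⟶ d'''),
        g' ≫ h = f' ∧ g'' ≫ h = f'')
    (h3 : ∀ (d t : Cocone ψ), S d → ∀ (s : t ⟶ d) (r : d ⟶ t), s ≫ r = 𝟙 t → S t)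
    (h4 : HasLimit (ObjectProperty.ι S ⋙ Cocones.forget ψ)) :
    HasColimit ψ := by
  classical
  haveI := h4
  set F := ObjectProperty.ι S ⋙ Cocones.forget ψ with hF
  let π : ∀ d : Cocone ψ, S d → (limit F ⟶ d.pt) := fun d hd => limit.π F ⟨d, hd⟩
  have πw : ∀ (d' d'' : Cocone ψ) (hd' : S d') (hd'' : S d'') (k : d' ⟶ d''),
      π d' hd' ≫ k.hom = π d'' hd'' := by
    intro d' d'' hd' hd'' k
    exact limit.w F (j := ⟨d', hd'⟩) (j' := ⟨d'', hd''⟩) (ObjectProperty.homMk k)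
  let c0 : Cocone ψ :=
  { pt := limit F
    ι :=
    { app := fun a => limit.lift F
        { pt := ψ.obj a
          π :=
          { app := fun d => d.obj.ι.app a
            naturality := fun d d' k =>
              (Category.id_comp _).trans (k.hom.w a).symm } }
      naturality := fun a a' m => by
        apply limit.hom_ext
        intro d
        simp
        exact d.obj.w m } }
  have c0π : ∀ (a : A) (d : Cocone ψ) (hd : S d), c0.ι.app a ≫ π d hd = d.ι.app a := by
    intro a d hd
    exact limit.lift_π _ (⟨d, hd⟩ : ObjectProperty.FullSubcategory S)
  let πm : ∀ (d : Cocone ψ) (hd : S d), c0 ⟶ d := fun d hd =>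
    { hom := π d hd, w := fun a => c0π a d hd }
  obtain ⟨d₀, hd₀, ⟨f⟩⟩ := h1 c0
  let e : limit F ⟶ limit F := π d₀ hd₀ ≫ f.hom
  have he : ∀ (d : Cocone ψ) (hd : S d), e ≫ π d hd = π d hd := by
    intro d hd
    have := πw d₀ d hd₀ hd (f ≫ πm d hd)
    simpa [e] using this
  have hee : e ≫ e = e := by
    show e ≫ (π d₀ hd₀ ≫ f.hom) = e
    rw [← Category.assoc, he d₀ hd₀]
  have c0e : ∀ a, c0.ι.app a ≫ e = c0.ι.app a := by
    intro a
    show c0.ι.app a ≫ π d₀ hd₀ ≫ f.hom = _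
    rw [← Category.assoc, c0π a d₀ hd₀, f.w a]
  obtain ⟨T, s, r, hsr, hrs⟩ := IsIdempotentComplete.idempotents_split (limit F) e hee
  let cstar : Cocone ψ :=
  { pt := T
    ι :=
    { app := fun a => c0.ι.app a ≫ r
      naturality := fun a a' m => by
        show ψ.map m ≫ (c0.ι.app a' ≫ r) = (c0.ι.app a ≫ r) ≫ 𝟙 T
        rw [Category.comp_id, ← Category.assoc, c0.w m] } }
  have her : e ≫ r = r := by
    rw [← hrs, Category.assoc, hsr, Category.comp_id]
  let rm : c0 ⟶ cstar := { hom := r, w := fun a => rfl }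
  let sm : cstar ⟶ c0 :=
  { hom := s
    w := fun a => by
      show (c0.ι.app a ≫ r) ≫ s = c0.ι.app a
      rw [Category.assoc, hrs]
      exact c0e a }
  have hScstar : S cstar := by
    apply h3 d₀ cstar hd₀ (sm ≫ πm d₀ hd₀) (f ≫ rm)
    apply CoconeMorphism.ext
    show (s ≫ π d₀ hd₀) ≫ (f.hom ≫ r) = 𝟙 T
    calc (s ≫ π d₀ hd₀) ≫ (f.hom ≫ r) = s ≫ (π d₀ hd₀ ≫ f.hom) ≫ r := by
          simp only [Category.assoc]
      _ = s ≫ e ≫ r := rfl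
      _ = s ≫ r := by rw [her]
      _ = 𝟙 T := hsr
  -- the limit projection to `cstar` equals `r`
  obtain ⟨d₃, hd₃, h, g', g'', hg', hg''⟩ := h2 c0 d₀ cstar f sm hd₀ hScstar
  have hπs : π cstar hScstar ≫ s = e := by
    have e1 : π cstar hScstar ≫ g''.hom = π d₃ hd₃ := πw _ _ _ _ g''
    have e2 : π d₀ hd₀ ≫ g'.hom = π d₃ hd₃ := πw _ _ _ _ g'
    have hs : g''.hom ≫ h.hom = s := congrArg CoconeMorphism.hom hg''
    have hf : g'.hom ≫ h.hom = f.hom := congrArg CoconeMorphism.hom hg'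
    calc π cstar hScstar ≫ s = π cstar hScstar ≫ g''.hom ≫ h.hom := by rw [hs]
      _ = (π cstar hScstar ≫ g''.hom) ≫ h.hom := by rw [Category.assoc]
      _ = π d₃ hd₃ ≫ h.hom := by rw [e1]
      _ = (π d₀ hd₀ ≫ g'.hom) ≫ h.hom := by rw [e2]
      _ = π d₀ hd₀ ≫ g'.hom ≫ h.hom := by rw [Category.assoc]
      _ = e := by rw [hf]
  have hπr : π cstar hScstar = r := by
    have : (π cstar hScstar ≫ s) ≫ r = (r ≫ s) ≫ r := by rw [hπs, hrs]
    have h' : π cstar hScstar ≫ 𝟙 T = r := by simpa [Category.assoc, hsr] using this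
    exact (Category.comp_id _).symm.trans h'
  have hsπ : s ≫ π cstar hScstar = 𝟙 T := by rw [hπr, hsr]
  have keyuniq : ∀ (d : Cocone ψ) (g₁ g₂ : cstar ⟶ d), g₁.hom = g₂.hom := by
    intro d g₁ g₂
    obtain ⟨d₄, hd₄, h', k₁, k₂, hk₁, hk₂⟩ := h2 d cstar cstar g₁ g₂ hScstar hScstar
    have kcan : ∀ k : cstar ⟶ d₄, k.hom = s ≫ π d₄ hd₄ := by
      intro k
      have w1 : π cstar hScstar ≫ k.hom = π d₄ hd₄ := πw _ _ _ _ k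
      calc k.hom = 𝟙 T ≫ k.hom := by rw [Category.id_comp]
        _ = (s ≫ π cstar hScstar) ≫ k.hom := by rw [hsπ]
        _ = s ≫ π cstar hScstar ≫ k.hom := by rw [Category.assoc]
        _ = s ≫ π d₄ hd₄ := by rw [w1]
    have e1 : k₁.hom ≫ h'.hom = g₁.hom := congrArg CoconeMorphism.hom hk₁
    have e2 : k₂.hom ≫ h'.hom = g₂.hom := congrArg CoconeMorphism.hom hk₂
    rw [← e1, ← e2, kcan k₁, kcan k₂]
  have wexists : ∀ d : Cocone ψ, Nonempty (cstar ⟶ d) := by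
    intro d
    obtain ⟨d', hd', ⟨f'⟩⟩ := h1 d
    exact ⟨sm ≫ πm d' hd' ≫ f'⟩
  refine HasColimit.mk ⟨cstar, ?_⟩
  exact
  { desc := fun d => (wexists d).some.hom
    fac := fun d a => (wexists d).some.w a
    uniq := fun d m hm => keyuniq d ⟨m, hm⟩ (wexists d).some }
end
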